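/- arXiv:2507.16513 — 2 statements merged into one kernel-verified Lean document; each statement's English description precedes it below -/
import Mathlib

section
/- Let H be a real Hilbert space, U ⊆ H a set containing at least two points, R an operator defined on U mapping into H, Y ⊆ H a set containing at least two points with R(U) ⊆ Y, and T an operator defined on Y mapping into H. If at least one of SRG_U(R), SRG_Y(T) satisfies an arc property (left-arc or right-arc), then SRG_U(T ∘ R) ⊆ SRG_Y(T) · SRG_U(R), where the right-hand side is the Minkowski product { z·w : z ∈ SRG_Y(T), w ∈ SRG_U(R) } of subsets of ℂ. -/
open ComplexConjugate
open scoped RealInnerProductSpace Pointwise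

/-- The point `(‖Δy‖/‖Δu‖)·e^{iθ}` with `θ = arccos(⟨Δu,Δy⟩/(‖Δu‖‖Δy‖)) ∈ [0,π]`
contributed to the SRG by a pair of increments `Δu`, `Δy` (equal to `0` when `Δy = 0`). -/
noncomputable def srgPoint {H : Type*} [NormedAddCommGroup H] [InnerProductSpace ℝ H]
    (du dy : H) : ℂ :=
  ((‖dy‖ / ‖du‖ : ℝ) : ℂ) *
    Complex.exp (Complex.I * ((Real.arccos (⟪du, dy⟫ / (‖du‖ * ‖dy‖)) : ℝ) : ℂ))

/-- The Scaled Relative Graph of an operator `R` on a real Hilbert space over a set `U` of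
inputs; both signs of the angle are included (via complex conjugation). -/
noncomputable def SRG {H : Type*} [NormedAddCommGroup H] [InnerProductSpace ℝ H]
    (R : H → H) (U : Set H) : Set ℂ :=
  { z | ∃ u₁ ∈ U, ∃ u₂ ∈ U, u₁ ≠ u₂ ∧
      (z = srgPoint (u₁ - u₂) (R u₁ - R u₂) ∨
        z = conj (srgPoint (u₁ - u₂) (R u₁ - R u₂))) }

/-- The Scaled Graph of an operator `R` at the particular input `us`, over a set `U` of inputs. -/
noncomputable def SG {H : Type*} [NormedAddCommGroup H] [InnerProductSpace ℝ H]
    (R : H → H) (U : Set H) (us : H) : Set ℂ :=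
  { z | ∃ u ∈ U, u ≠ us ∧
      (z = srgPoint (u - us) (R u - R us) ∨
        z = conj (srgPoint (u - us) (R u - R us))) }

/-- A set `C ⊆ ℂ` satisfies the chord property if for every `z ∈ C` the segment `[z, z̄]`
is contained in `C`. -/
def ChordProperty (C : Set ℂ) : Prop :=
  ∀ z ∈ C, ∀ α ∈ Set.Icc (0 : ℝ) 1, (α : ℂ) * z + ((1 - α : ℝ) : ℂ) * conj z ∈ C

/-- The right-hand arc `Arc⁺(z, z̄) = { r e^{i(1−2α)φ} : α ∈ [0,1] }`, where `z = r e^{iφ}`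
with `φ = arg z ∈ (−π, π]`. -/
noncomputable def arcPlus (z : ℂ) : Set ℂ :=
  { w | ∃ α ∈ Set.Icc (0 : ℝ) 1,
      w = ((‖z‖ : ℝ) : ℂ) *
        Complex.exp (Complex.I * (((1 - 2 * α) * Complex.arg z : ℝ) : ℂ)) }

/-- The left-hand arc `Arc⁻(z, z̄) = −Arc⁺(−z, −z̄)`. -/
noncomputable def arcMinus (z : ℂ) : Set ℂ := (fun w => -w) '' arcPlus (-z)

/-- `C` satisfies the right-arc property if `Arc⁺(z,z̄) ⊆ C` for all `z ∈ C`. -/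
def RightArcProperty (C : Set ℂ) : Prop := ∀ z ∈ C, arcPlus z ⊆ C

/-- `C` satisfies the left-arc property if `Arc⁻(z,z̄) ⊆ C` for all `z ∈ C`. -/
def LeftArcProperty (C : Set ℂ) : Prop := ∀ z ∈ C, arcMinus z ⊆ C

/-- `C` satisfies an arc property if it satisfies the left-arc or the right-arc property. -/
def ArcProperty (C : Set ℂ) : Prop := LeftArcProperty C ∨ RightArcProperty C

/-!
Write every SRG point as `r e^{iθ}`, `θ` being the angle between the two increments. For
`Δu = u₁ - u₂`, `Δy = R u₁ - R u₂` and `ΔT = T (R u₁) - T (R u₂)`, the angles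
`θ₁ = ∠(Δu, Δy)`, `θ₂ = ∠(Δy, ΔT)`, `θ₃ = ∠(Δu, ΔT)` are the sides of a spherical triangle, so
`|θ₃ - θ₂| ≤ θ₁ ≤ θ₃ + θ₂ ≤ 2π - θ₁`. Hence an SRG containing `r₁ e^{iθ₁}` also contains
`r₁ e^{i(θ₃ - θ₂)}` if it has the right-arc property, and `r₁ e^{i(θ₃ + θ₂)}` if it has the
left-arc property. Multiplying by `r₂ e^{±iθ₂}` from the other SRG, which is closed under
conjugation, gives `r₁ r₂ e^{iθ₃}`, the SRG point of `T ∘ R`.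
-/

open Complex InnerProductGeometry
open scoped Real

def IsSphericalTriangle (a b c : ℝ) : Prop :=
  c ≤ a + b ∧ a ≤ b + c ∧ b ≤ a + c ∧ a + b + c ≤ 2 * π

lemma IsSphericalTriangle.swap {a b c : ℝ} (h : IsSphericalTriangle a b c) :
    IsSphericalTriangle b a c := by
  obtain ⟨h₁, h₂, h₃, h₄⟩ := h
  exact ⟨by linarith, h₃, h₂, by linarith⟩

lemma isSphericalTriangle_angle {V : Type*} [NormedAddCommGroup V] [InnerProductSpace ℝ V]
    (x y z : V) : IsSphericalTriangle (angle x y) (angle y z) (angle x z) := by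
  have hxz := angle_le_angle_add_angle x y z
  have hxy := angle_le_angle_add_angle x z y
  have hyz := angle_le_angle_add_angle y x z
  have hsum := angle_le_angle_add_angle x (-y) z
  rw [angle_comm z y] at hxy
  rw [angle_comm y x] at hyz
  rw [angle_neg_right, angle_neg_left] at hsum
  exact ⟨hxz, by linarith, by linarith, by linarith⟩

lemma exists_one_sub_two_mul_mul_eq {β μ : ℝ} (h : |μ| ≤ |β|) :
    ∃ α ∈ Set.Icc (0 : ℝ) 1, (1 - 2 * α) * β = μ := by
  rcases eq_or_ne β 0 with rfl | hβ
  · exact ⟨0, by norm_num, by simpa [eq_comm] using h⟩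
  · have hq := abs_le.mp <| (abs_div μ β).trans_le (div_le_one_of_le₀ h (abs_nonneg β))
    refine ⟨(1 - μ / β) / 2, ⟨by linarith [hq.2], by linarith [hq.1]⟩, ?_⟩
    field_simp
    ring

lemma norm_ofReal_mul_exp_I {r : ℝ} (hr : 0 ≤ r) (θ : ℝ) : ‖(r : ℂ) * exp (I * θ)‖ = r := by
  rw [norm_mul, mul_comm I, norm_exp_ofReal_mul_I, norm_real, Real.norm_of_nonneg hr, mul_one]

lemma arg_ofReal_mul_exp_I {r θ : ℝ} (hr : 0 < r) (hθ : θ ∈ Set.Ioc (-π) π) :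
    arg ((r : ℂ) * exp (I * θ)) = θ := by
  rw [mul_comm I, exp_mul_I]
  exact arg_mul_cos_add_sin_mul_I hr hθ

lemma abs_arg_neg {z : ℂ} (hz : z ≠ 0) : |arg (-z)| = π - |arg z| := by
  rw [← angle_one_right (neg_ne_zero.mpr hz), ← angle_one_right hz, angle_neg_left]

lemma ofReal_mul_exp_I_mul (r₁ r₂ θ₁ θ₂ : ℝ) :
    (r₁ : ℂ) * exp (I * θ₁) * ((r₂ : ℂ) * exp (I * θ₂)) =
      ((r₁ * r₂ : ℝ) : ℂ) * exp (I * (θ₁ + θ₂ : ℝ)) := by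
  push_cast
  rw [mul_add, exp_add]
  ring

lemma conj_ofReal_mul_exp_I (r θ : ℝ) :
    conj ((r : ℂ) * exp (I * θ)) = (r : ℂ) * exp (I * (-θ : ℝ)) := by
  rw [map_mul, conj_ofReal, ← exp_conj, map_mul, conj_I, conj_ofReal]
  push_cast
  ring_nf

lemma neg_ofReal_mul_exp_I (r θ : ℝ) :
    -((r : ℂ) * exp (I * θ)) = (r : ℂ) * exp (I * (θ - π : ℝ)) := by
  rw [ofReal_sub, mul_sub, exp_sub, mul_comm I (π : ℂ), exp_pi_mul_I]
  ring

lemma norm_mul_exp_I_mem_arcPlus {z : ℂ} {γ : ℝ} (h : |γ| ≤ |arg z|) :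
    (‖z‖ : ℂ) * exp (I * γ) ∈ arcPlus z := by
  obtain ⟨α, hα, rfl⟩ := exists_one_sub_two_mul_mul_eq h
  exact ⟨α, hα, rfl⟩

lemma norm_mul_exp_I_mem_arcMinus {z : ℂ} (hz : z ≠ 0) {γ : ℝ} (h₁ : |arg z| ≤ γ)
    (h₂ : γ ≤ 2 * π - |arg z|) : (‖z‖ : ℂ) * exp (I * γ) ∈ arcMinus z := by
  have h : |γ - π| ≤ |arg (-z)| := by
    rw [abs_arg_neg hz, abs_le]
    constructor <;> linarith
  refine ⟨_, norm_mul_exp_I_mem_arcPlus h, ?_⟩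
  rw [norm_neg, ← neg_ofReal_mul_exp_I]
  exact neg_neg _

lemma ArcProperty.ofReal_mul_exp_I_sub_mem_or_add_mem {A : Set ℂ} (hA : ArcProperty A)
    {r θ φ ψ : ℝ} (hr : 0 ≤ r) (hmem : (r : ℂ) * exp (I * θ) ∈ A)
    (htri : IsSphericalTriangle θ φ ψ) :
    (r : ℂ) * exp (I * (ψ - φ : ℝ)) ∈ A ∨ (r : ℂ) * exp (I * (ψ + φ : ℝ)) ∈ A := by
  rcases hr.eq_or_lt with rfl | hr
  · simp only [ofReal_zero, zero_mul] at hmem ⊢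
    exact Or.inl hmem
  obtain ⟨h₁, h₂, h₃, h₄⟩ := htri
  set z : ℂ := (r : ℂ) * exp (I * θ)
  have hnorm : ‖z‖ = r := norm_ofReal_mul_exp_I hr.le θ
  have harg : |arg z| = θ := by
    rw [arg_ofReal_mul_exp_I hr ⟨by linarith [Real.pi_pos], by linarith⟩, abs_of_nonneg]
    linarith
  rcases hA with hL | hR
  · have hne : z ≠ 0 := mul_ne_zero (ofReal_ne_zero.mpr hr.ne') (exp_ne_zero _)
    have h := norm_mul_exp_I_mem_arcMinus hne (γ := ψ + φ) (by linarith) (by linarith)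
    rw [hnorm] at h
    exact Or.inr (hL z hmem h)
  · have h := norm_mul_exp_I_mem_arcPlus (z := z) (γ := ψ - φ)
      (by rw [harg, abs_le]; constructor <;> linarith)
    rw [hnorm] at h
    exact Or.inl (hR z hmem h)

lemma ofReal_mul_exp_I_mem_mul {A B : Set ℂ} (hA : ArcProperty A)
    (hB : ∀ w ∈ B, conj w ∈ B) {r₁ r₂ θ₁ θ₂ θ₃ : ℝ} (hr₁ : 0 ≤ r₁)
    (ha : (r₁ : ℂ) * exp (I * θ₁) ∈ A) (hb : (r₂ : ℂ) * exp (I * θ₂) ∈ B)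
    (htri : IsSphericalTriangle θ₁ θ₂ θ₃) :
    ((r₁ * r₂ : ℝ) : ℂ) * exp (I * θ₃) ∈ A * B := by
  rcases hA.ofReal_mul_exp_I_sub_mem_or_add_mem hr₁ ha htri with h | h
  · convert Set.mul_mem_mul h hb using 1
    rw [ofReal_mul_exp_I_mul, sub_add_cancel]
  · convert Set.mul_mem_mul h (hB _ hb) using 1
    rw [conj_ofReal_mul_exp_I, ofReal_mul_exp_I_mul, add_neg_cancel_right]

section SRG

variable {H : Type*} [NormedAddCommGroup H] [InnerProductSpace ℝ H]

lemma srgPoint_eq (du dy : H) :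
    srgPoint du dy = ((‖dy‖ / ‖du‖ : ℝ) : ℂ) * exp (I * angle du dy) := rfl

lemma srgPoint_zero_right (du : H) : srgPoint du 0 = 0 := by
  simp [srgPoint]

lemma srgPoint_mem_SRG {R : H → H} {U : Set H} {u₁ u₂ : H} (hu₁ : u₁ ∈ U) (hu₂ : u₂ ∈ U)
    (hne : u₁ ≠ u₂) : srgPoint (u₁ - u₂) (R u₁ - R u₂) ∈ SRG R U :=
  ⟨u₁, hu₁, u₂, hu₂, hne, Or.inl rfl⟩

lemma conj_mem_SRG {R : H → H} {U : Set H} {z : ℂ} (hz : z ∈ SRG R U) : conj z ∈ SRG R U := by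
  obtain ⟨u₁, hu₁, u₂, hu₂, hne, rfl | rfl⟩ := hz
  · exact ⟨u₁, hu₁, u₂, hu₂, hne, Or.inr rfl⟩
  · exact ⟨u₁, hu₁, u₂, hu₂, hne, Or.inl (conj_conj _)⟩

lemma SRG_nonempty (R : H → H) {U : Set H} (hU : U.Nontrivial) : (SRG R U).Nonempty := by
  obtain ⟨u₁, hu₁, u₂, hu₂, hne⟩ := hU
  exact ⟨_, srgPoint_mem_SRG (R := R) hu₁ hu₂ hne⟩

lemma srgPoint_comp_mem_mul {R T : H → H} {U Y : Set H} (hY : Y.Nontrivial)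
    (hmaps : Set.MapsTo R U Y) (harc : ArcProperty (SRG R U) ∨ ArcProperty (SRG T Y))
    {u₁ u₂ : H} (hu₁ : u₁ ∈ U) (hu₂ : u₂ ∈ U) (hne : u₁ ≠ u₂) :
    srgPoint (u₁ - u₂) (T (R u₁) - T (R u₂)) ∈ SRG T Y * SRG R U := by
  have hmemR := srgPoint_mem_SRG (R := R) hu₁ hu₂ hne
  by_cases hR : R u₁ = R u₂
  · obtain ⟨w, hw⟩ := SRG_nonempty T hY
    refine ⟨w, hw, _, hmemR, ?_⟩
    simp only [hR, sub_self, srgPoint_zero_right, mul_zero]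
  have hmemT := srgPoint_mem_SRG (R := T) (hmaps hu₁) (hmaps hu₂) hR
  have htri := isSphericalTriangle_angle (u₁ - u₂) (R u₁ - R u₂) (T (R u₁) - T (R u₂))
  have hdy : ‖R u₁ - R u₂‖ ≠ 0 := norm_ne_zero_iff.mpr (sub_ne_zero.mpr hR)
  rcases harc with hA | hA
  · rw [mul_comm (SRG T Y), srgPoint_eq, ← div_mul_div_cancel₀ hdy, mul_comm (_ / _)]
    exact ofReal_mul_exp_I_mem_mul hA (fun _ => conj_mem_SRG) (by positivity) hmemR hmemT htri
  · rw [srgPoint_eq, ← div_mul_div_cancel₀ hdy]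
    exact ofReal_mul_exp_I_mem_mul hA (fun _ => conj_mem_SRG) (by positivity) hmemT hmemR htri.swap

end SRG

theorem stmt7_general {H : Type*} [NormedAddCommGroup H] [InnerProductSpace ℝ H]
    (R T : H → H) (U Y : Set H)
    (hY : ∃ u ∈ Y, ∃ v ∈ Y, u ≠ v)
    (hmaps : Set.MapsTo R U Y)
    (harc : ArcProperty (SRG R U) ∨ ArcProperty (SRG T Y)) :
    SRG (T ∘ R) U ⊆ SRG T Y * SRG R U := by
  rintro z ⟨u₁, hu₁, u₂, hu₂, hne, rfl | rfl⟩
  · exact srgPoint_comp_mem_mul hY hmaps harc hu₁ hu₂ hne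
  · obtain ⟨a, ha, b, hb, hab : a * b = _⟩ := srgPoint_comp_mem_mul hY hmaps harc hu₁ hu₂ hne
    convert Set.mul_mem_mul (conj_mem_SRG ha) (conj_mem_SRG hb) using 1
    rw [← map_mul, hab]
    rfl

/-- if `U`, `Y` each contain at least two points, `R(U) ⊆ Y`, and at least one
of `SRG_U(R)`, `SRG_Y(T)` satisfies an arc property, then `SRG_U(T∘R) ⊆ SRG_Y(T)·SRG_U(R)`
(Minkowski product). -/
theorem stmt7 {H : Type*} [NormedAddCommGroup H] [InnerProductSpace ℝ H]
    (R T : H → H) (U Y : Set H)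
    (hU : ∃ u ∈ U, ∃ v ∈ U, u ≠ v) (hY : ∃ u ∈ Y, ∃ v ∈ Y, u ≠ v)
    (hmaps : Set.MapsTo R U Y)
    (harc : ArcProperty (SRG R U) ∨ ArcProperty (SRG T Y)) :
    SRG (T ∘ R) U ⊆ SRG T Y * SRG R U :=
  stmt7_general R T U Y hY hmaps harc
end

section
/- Let H be a real Hilbert space, U ⊆ H a set containing at least two points, and R, S operators defined on U mapping into H. Then SRG_U(R + S) ⊆ (SRG_U(R)^c + SRG_U(S)) ∩ (SRG_U(R) + SRG_U(S)^c), where C^c := ∪_{z∈C} [z, z̄] denotes the chord completion of C ⊆ ℂ, the sums are Minkowski sums, and (R+S)u := Ru + Su. -/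
open ComplexConjugate
open scoped RealInnerProductSpace Pointwise

/-- The chord completion `C^c = ⋃_{z ∈ C} [z, z̄]`. -/
def chordCompletion (C : Set ℂ) : Set ℂ :=
  { w | ∃ z ∈ C, ∃ α ∈ Set.Icc (0 : ℝ) 1, w = (α : ℂ) * z + ((1 - α : ℝ) : ℂ) * conj z }


/-!
Write `Δu = u₁ - u₂` and split an output increment `Δy` into its component along `Δu` and its
component `Δy⊥` orthogonal to `Δu`. The SRG point of the pair is then
`⟪Δu, Δy⟫ / ‖Δu‖² + i ‖Δy⊥‖ / ‖Δu‖`. For `R + S` the increments add, so the real parts add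
exactly, while the triangle inequality for the orthogonal components puts the imaginary part of
the `R + S` point within distance `Im z_R` of that of the `S` point, where `z_R` is the `R` point.
So the difference is absorbed by moving `z_R` along its chord `[z_R, z̄_R]`; symmetrically for `S`.
-/

section SRGPoint

variable {H : Type*} [NormedAddCommGroup H] [InnerProductSpace ℝ H]

noncomputable def orthComponent (du dy : H) : H := dy - (⟪du, dy⟫ / ‖du‖ ^ 2) • du

lemma orthComponent_add (du a b : H) :
    orthComponent du (a + b) = orthComponent du a + orthComponent du b := by
  simp only [orthComponent, inner_add_right, add_div]
  module

lemma norm_orthComponent_sq {du : H} (hdu : du ≠ 0) (dy : H) :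
    ‖orthComponent du dy‖ ^ 2 = ‖dy‖ ^ 2 - ⟪du, dy⟫ ^ 2 / ‖du‖ ^ 2 := by
  have : ‖du‖ ≠ 0 := norm_ne_zero_iff.mpr hdu
  rw [orthComponent, norm_sub_sq_real, inner_smul_right, norm_smul, Real.norm_eq_abs, mul_pow,
    sq_abs, real_inner_comm dy du]
  field_simp
  ring

lemma srgPoint_eq_s10 {du : H} (hdu : du ≠ 0) (dy : H) :
    srgPoint du dy = ⟨⟪du, dy⟫ / ‖du‖ ^ 2, ‖orthComponent du dy‖ / ‖du‖⟩ := by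
  have hdu' : ‖du‖ ≠ 0 := norm_ne_zero_iff.mpr hdu
  rcases eq_or_ne dy 0 with rfl | hdy
  · simp [srgPoint, orthComponent, Complex.ext_iff]
  have hdy' : ‖dy‖ ≠ 0 := norm_ne_zero_iff.mpr hdy
  set x : ℝ := ⟪du, dy⟫ / (‖du‖ * ‖dy‖) with hx
  have hx_abs : |x| ≤ 1 := abs_real_inner_div_norm_mul_norm_le_one du dy
  have hsin : ‖dy‖ * Real.sqrt (1 - x ^ 2) = ‖orthComponent du dy‖ := by
    rw [← Real.sqrt_sq (norm_nonneg dy), ← Real.sqrt_mul (sq_nonneg _),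
      ← Real.sqrt_sq (norm_nonneg (orthComponent du dy)), norm_orthComponent_sq hdu, hx]
    congr 1
    field_simp
  rw [srgPoint, mul_comm Complex.I, Complex.exp_mul_I, ← Complex.ofReal_cos, ← Complex.ofReal_sin,
    Real.cos_arccos (neg_le_of_abs_le hx_abs) (le_of_abs_le hx_abs), Real.sin_arccos]
  apply Complex.ext
  · simp only [Complex.mul_re, Complex.add_re, Complex.ofReal_re, Complex.ofReal_im,
      Complex.I_re, Complex.I_im]
    rw [hx]
    field_simp
    ring
  · simp only [Complex.mul_im, Complex.add_im, Complex.ofReal_re, Complex.ofReal_im,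
      Complex.I_re, Complex.I_im]
    rw [← hsin]
    ring

lemma srgPoint_add_re {du : H} (hdu : du ≠ 0) (a b : H) :
    (srgPoint du (a + b)).re = (srgPoint du a).re + (srgPoint du b).re := by
  simp only [srgPoint_eq_s10 hdu, inner_add_right, add_div]

lemma abs_srgPoint_add_im_sub_le {du : H} (hdu : du ≠ 0) (a b : H) :
    |(srgPoint du (a + b)).im - (srgPoint du b).im| ≤ (srgPoint du a).im := by
  have hpos : 0 < ‖du‖ := norm_pos_iff.mpr hdu
  simp only [srgPoint_eq_s10 hdu, orthComponent_add]
  rw [div_sub_div_same, abs_div, abs_of_pos hpos, div_le_div_iff_of_pos_right hpos]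
  simpa using abs_norm_sub_norm_le (orthComponent du a + orthComponent du b) (orthComponent du b)

end SRGPoint

lemma mem_chordCompletion_of_abs_le_im {C : Set ℂ} {z : ℂ} (hz : z ∈ C) {s : ℝ}
    (hs : |s| ≤ z.im) : (⟨z.re, s⟩ : ℂ) ∈ chordCompletion C := by
  rcases (abs_nonneg s).trans hs |>.eq_or_lt with h0 | hpos
  · have hs0 : s = 0 := abs_nonpos_iff.mp (h0 ▸ hs)
    refine ⟨z, hz, 0, ⟨le_rfl, zero_le_one⟩, Complex.ext ?_ ?_⟩ <;> simp [hs0, ← h0]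
  -- `α z + (1 - α) z̄ = z.re + i (2α - 1) z.im`, so `α = (s / z.im + 1) / 2` hits height `s`.
  have h1 : -1 ≤ s / z.im := by
    rw [le_div_iff₀ hpos]
    linarith [neg_abs_le s]
  have h2 : s / z.im ≤ 1 := (div_le_one hpos).mpr ((le_abs_self s).trans hs)
  refine ⟨z, hz, (s / z.im + 1) / 2, ⟨by linarith, by linarith⟩, Complex.ext ?_ ?_⟩
  · simp [Complex.mul_re]
    ring
  · simp [Complex.mul_im]
    field_simp
    ring

lemma mem_chordCompletion_add {C D : Set ℂ} {z v w : ℂ} (hz : z ∈ C) (hv : v ∈ D)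
    (hre : w.re = z.re + v.re) (him : |w.im - v.im| ≤ z.im) :
    w ∈ chordCompletion C + D := by
  have hw : w = ⟨z.re, w.im - v.im⟩ + v := Complex.ext (by simpa using hre) (by simp)
  exact hw ▸ Set.add_mem_add (mem_chordCompletion_of_abs_le_im hz him) hv

lemma mem_chordCompletion_add_inter {C D : Set ℂ} {p q w : ℂ} (hp : p ∈ C) (hp' : conj p ∈ C)
    (hq : q ∈ D) (hq' : conj q ∈ D) (hre : w.re = p.re + q.re) (hC : |w.im - q.im| ≤ p.im)
    (hD : |w.im - p.im| ≤ q.im) :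
    w ∈ (chordCompletion C + D) ∩ (C + chordCompletion D) ∧
      conj w ∈ (chordCompletion C + D) ∩ (C + chordCompletion D) := by
  have hre' : w.re = q.re + p.re := hre.trans (add_comm _ _)
  have hC' : |(conj w).im - (conj q).im| ≤ p.im := by simpa [neg_add_eq_sub, abs_sub_comm] using hC
  have hD' : |(conj w).im - (conj p).im| ≤ q.im := by simpa [neg_add_eq_sub, abs_sub_comm] using hD
  rw [add_comm C]
  exact ⟨⟨mem_chordCompletion_add hp hq hre hC, mem_chordCompletion_add hq hp hre' hD⟩,
    ⟨mem_chordCompletion_add hp hq' (by simpa using hre) hC',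
      mem_chordCompletion_add hq hp' (by simpa using hre') hD'⟩⟩

theorem stmt10_general {H : Type*} [NormedAddCommGroup H] [InnerProductSpace ℝ H]
    (R S : H → H) (U : Set H) :
    SRG (fun u => R u + S u) U ⊆
      (chordCompletion (SRG R U) + SRG S U) ∩ (SRG R U + chordCompletion (SRG S U)) := by
  rintro w ⟨u₁, hu₁, u₂, hu₂, hne, hw⟩
  have hdu : u₁ - u₂ ≠ 0 := sub_ne_zero.mpr hne
  have hsum : R u₁ + S u₁ - (R u₂ + S u₂) = (R u₁ - R u₂) + (S u₁ - S u₂) := by abel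
  have hre := srgPoint_add_re hdu (R u₁ - R u₂) (S u₁ - S u₂)
  have hC := abs_srgPoint_add_im_sub_le hdu (R u₁ - R u₂) (S u₁ - S u₂)
  have hD := abs_srgPoint_add_im_sub_le hdu (S u₁ - S u₂) (R u₁ - R u₂)
  rw [add_comm (S u₁ - S u₂)] at hD
  have hmem := mem_chordCompletion_add_inter (C := SRG R U) (D := SRG S U)
    ⟨u₁, hu₁, u₂, hu₂, hne, .inl rfl⟩ ⟨u₁, hu₁, u₂, hu₂, hne, .inr rfl⟩
    ⟨u₁, hu₁, u₂, hu₂, hne, .inl rfl⟩ ⟨u₁, hu₁, u₂, hu₂, hne, .inr rfl⟩ hre hC hD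
  rw [hsum] at hw
  rcases hw with rfl | rfl
  exacts [hmem.1, hmem.2]

/-- improved chord completion bound for sums: if `U` contains at least two points,
then `SRG_U(R+S) ⊆ (SRG_U(R)^c + SRG_U(S)) ∩ (SRG_U(R) + SRG_U(S)^c)`. -/
theorem stmt10 {H : Type*} [NormedAddCommGroup H] [InnerProductSpace ℝ H]
    (R S : H → H) (U : Set H) (hU : ∃ u ∈ U, ∃ v ∈ U, u ≠ v) :
    SRG (fun u => R u + S u) U ⊆
      (chordCompletion (SRG R U) + SRG S U) ∩ (SRG R U + chordCompletion (SRG S U)) :=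
  stmt10_general R S U
end
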